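/- arXiv:1507.01069 — 3 statements merged into one kernel-verified Lean document; each statement's English description precedes it below -/
import Mathlib

section
/- Let $r : [0,1] \to \mathbb{R}$ be continuously differentiable with $r(0) = 0$, and suppose $\int_0^1 (r(x)-x)^2\,dx < \infty$ and $\int_0^1 x^2 (r'(x)-1)^2\,dx < \infty$. Then for every $x \in [0,1]$, $$x\,(r(x)-x)^2 \le \int_0^1 (r(y)-y)^2\,dy + 2\left(\int_0^1 (r(y)-y)^2\,dy\right)^{1/2}\left(\int_0^1 y^2 (r'(y)-1)^2\,dy\right)^{1/2}.$$ -/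
/-!
Writing `u y = r y - y`, the fundamental theorem of calculus gives
`x u(x)² = ∫₀ˣ (y u(y)²)' dy = ∫₀ˣ u² + 2 ∫₀ˣ u · (y u')`.
The first integral is at most `∫₀¹ u²`, and the second is bounded by Cauchy–Schwarz by
`‖u‖_{L²} ‖y u'‖_{L²}`.
-/

open MeasureTheory Set intervalIntegral

theorem integral_abs_mul_le_sqrt_mul_sqrt {α : Type*} [MeasurableSpace α] {μ : Measure α}
    {f g : α → ℝ} (hf : MemLp f 2 μ) (hg : MemLp g 2 μ) :
    ∫ a, |f a * g a| ∂μ ≤ √(∫ a, f a ^ 2 ∂μ) * √(∫ a, g a ^ 2 ∂μ) := by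
  have h2 : ENNReal.ofReal 2 = 2 := by norm_num
  have hCS := integral_mul_norm_le_Lp_mul_Lq (μ := μ) Real.HolderConjugate.two_two
    (h2 ▸ hf) (h2 ▸ hg)
  simp only [Real.norm_eq_abs, ← abs_mul, Real.rpow_two, sq_abs] at hCS
  simpa only [Real.sqrt_eq_rpow, one_div] using hCS

theorem mul_sq_eq_integral_of_hasDerivAt {u u' : ℝ → ℝ} {x : ℝ} (hx : 0 ≤ x)
    (hu : ContinuousOn u (Icc 0 x)) (hu' : ∀ y ∈ Ioo 0 x, HasDerivAt u (u' y) y)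
    (hint : IntervalIntegrable (fun y => u y ^ 2 + 2 * (u y * (y * u' y))) volume 0 x) :
    x * u x ^ 2 = ∫ y in 0..x, u y ^ 2 + 2 * (u y * (y * u' y)) := by
  have hderiv : ∀ y ∈ Ioo 0 x,
      HasDerivAt (fun y => y * u y ^ 2) (u y ^ 2 + 2 * (u y * (y * u' y))) y := by
    intro y hy
    refine ((hasDerivAt_id' y).fun_mul ((hu' y hy).fun_pow 2)).congr_deriv ?_
    push_cast
    ring
  rw [integral_eq_sub_of_hasDerivAt_of_le hx (continuousOn_id.mul (hu.pow 2)) hderiv hint]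
  simp

theorem mul_sq_le_integral_sq_add_two_mul_sqrt_mul_sqrt {u u' : ℝ → ℝ} {b x : ℝ}
    (hu : ContinuousOn u (Icc 0 b)) (hu' : ∀ y ∈ Ioo 0 b, HasDerivAt u (u' y) y)
    (hu2 : MemLp u 2 (volume.restrict (Icc 0 b)))
    (hv2 : MemLp (fun y => y * u' y) 2 (volume.restrict (Icc 0 b))) (hx : x ∈ Icc 0 b) :
    x * u x ^ 2 ≤ (∫ y in 0..b, u y ^ 2)
      + 2 * √(∫ y in 0..b, u y ^ 2) * √(∫ y in 0..b, (y * u' y) ^ 2) := by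
  have hb : b ∈ Icc 0 b := ⟨hx.1.trans hx.2, le_rfl⟩
  have hIcc {f : ℝ → ℝ} : ∫ y in 0..b, f y = ∫ y in Icc 0 b, f y := by
    rw [integral_of_le hb.1, integral_Icc_eq_integral_Ioc]
  have hintOn {f : ℝ → ℝ} (hf : IntegrableOn f (Icc 0 b)) {c : ℝ} (hc : c ∈ Icc 0 b) :
      IntervalIntegrable f volume 0 c :=
    (intervalIntegrable_iff_integrableOn_Icc_of_le hc.1).2 (hf.mono_set (Icc_subset_Icc_right hc.2))
  have hsq : IntegrableOn (fun y => u y ^ 2) (Icc 0 b) := hu2.integrable_sq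
  have hprod : IntegrableOn (fun y => u y * (y * u' y)) (Icc 0 b) := hu2.integrable_mul hv2
  have hsq_le : ∫ y in 0..x, u y ^ 2 ≤ ∫ y in 0..b, u y ^ 2 :=
    integral_mono_interval le_rfl hx.1 hx.2 (.of_forall fun y => sq_nonneg _) (hintOn hsq hb)
  have hprod_le : ∫ y in 0..x, u y * (y * u' y) ≤ ∫ y in 0..b, |u y * (y * u' y)| :=
    calc ∫ y in 0..x, u y * (y * u' y) ≤ ∫ y in 0..x, |u y * (y * u' y)| :=
          integral_mono_on hx.1 (hintOn hprod hx) (hintOn hprod.abs hx) fun y _ => le_abs_self _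
      _ ≤ ∫ y in 0..b, |u y * (y * u' y)| :=
          integral_mono_interval le_rfl hx.1 hx.2 (.of_forall fun y => abs_nonneg _)
            (hintOn hprod.abs hb)
  have hCS := integral_abs_mul_le_sqrt_mul_sqrt hu2 hv2
  rw [← hIcc, ← hIcc, ← hIcc] at hCS
  have hprod2 := (hintOn hprod hx).const_mul 2
  calc x * u x ^ 2 = (∫ y in 0..x, u y ^ 2) + 2 * ∫ y in 0..x, u y * (y * u' y) := by
        rw [mul_sq_eq_integral_of_hasDerivAt hx.1 (hu.mono (Icc_subset_Icc_right hx.2))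
          (fun y hy => hu' y ⟨hy.1, hy.2.trans_le hx.2⟩) ((hintOn hsq hx).add hprod2),
          integral_add (hintOn hsq hx) hprod2, intervalIntegral.integral_const_mul]
    _ ≤ _ := by linarith

theorem pointwise_weighted_estimate_general (r : ℝ → ℝ)
    (hr : ContDiffOn ℝ 1 r (Icc 0 1))
    (h1 : IntegrableOn (fun y : ℝ => (r y - y) ^ 2) (Icc 0 1))
    (h2 : IntegrableOn (fun y : ℝ => y ^ 2 * (deriv r y - 1) ^ 2) (Icc 0 1)) :
    ∀ x ∈ Icc (0:ℝ) 1,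
      x * (r x - x) ^ 2
        ≤ (∫ y in (0:ℝ)..1, (r y - y) ^ 2)
          + 2 * Real.sqrt (∫ y in (0:ℝ)..1, (r y - y) ^ 2)
            * Real.sqrt (∫ y in (0:ℝ)..1, y ^ 2 * (deriv r y - 1) ^ 2) := by
  intro x hx
  have hcont : ContinuousOn (fun y => r y - y) (Icc 0 1) := hr.continuousOn.sub continuousOn_id
  have hderiv : ∀ y ∈ Ioo (0:ℝ) 1, HasDerivAt (fun y => r y - y) (deriv r y - 1) y :=
    fun y hy => ((hr.differentiableOn one_ne_zero y (Ioo_subset_Icc_self hy)).differentiableAt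
        (Icc_mem_nhds hy.1 hy.2)).hasDerivAt.sub (hasDerivAt_id y)
  have hu2 : MemLp (fun y => r y - y) 2 (volume.restrict (Icc 0 1)) :=
    (memLp_two_iff_integrable_sq (hcont.aestronglyMeasurable measurableSet_Icc)).2 h1
  have hv2 : MemLp (fun y => y * (deriv r y - 1)) 2 (volume.restrict (Icc 0 1)) := by
    have hmeas : Measurable fun y : ℝ => y * (deriv r y - 1) :=
      measurable_id.mul ((measurable_deriv r).sub measurable_const)
    refine (memLp_two_iff_integrable_sq hmeas.aestronglyMeasurable).2 ?_
    simp only [mul_pow]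
    exact h2
  simpa only [mul_pow] using
    mul_sq_le_integral_sq_add_two_mul_sqrt_mul_sqrt hcont hderiv hu2 hv2 hx

theorem pointwise_weighted_estimate (r : ℝ → ℝ)
    (hr : ContDiffOn ℝ 1 r (Icc 0 1)) (hr0 : r 0 = 0)
    (h1 : IntegrableOn (fun y : ℝ => (r y - y) ^ 2) (Icc 0 1))
    (h2 : IntegrableOn (fun y : ℝ => y ^ 2 * (deriv r y - 1) ^ 2) (Icc 0 1)) :
    ∀ x ∈ Icc (0:ℝ) 1,
      x * (r x - x) ^ 2
        ≤ (∫ y in (0:ℝ)..1, (r y - y) ^ 2)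
          + 2 * Real.sqrt (∫ y in (0:ℝ)..1, (r y - y) ^ 2)
            * Real.sqrt (∫ y in (0:ℝ)..1, y ^ 2 * (deriv r y - 1) ^ 2) :=
  pointwise_weighted_estimate_general r hr h1 h2
end

section
/- Let $w : [0,1] \to \mathbb{R}$ be continuously differentiable with $w \ge 0$, $w' \le 0$ on $[0,1]$, and $w(1) = 0$. Let $r : [0,1] \to \mathbb{R}$ be continuously differentiable with $r(0) = 0$, and suppose there is $\epsilon_0 \in (0, 1/2]$ sufficiently small such that $|r'(x) - 1| \le \epsilon_0$ and $|r(x)/x - 1| \le \epsilon_0$ for all $x \in (0,1]$. Define $\mathfrak{Q}(x) = \frac{x^2}{r(x)^2 r'(x)} - 1$. Then $$\int_0^1 w(x)\left[ 4\left(\frac{r(x)}{x} - 1\right)^2 + (r'(x)-1)^2 \right] dx \le 2 \int_0^1 w(x)\, \mathfrak{Q}(x)^2\, dx.$$ -/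
/-!
Write `a = r/x - 1`, `b = r' - 1`, so that `𝔔 = ((1 + a)² (1 + b))⁻¹ - 1 = -(2a + b) + O(a² + b²)`.
Since `2 (2a + b)² = (4a² + b²) + (4a² + 8ab + b²)`, for small `a, b` one gets pointwise
`4a² + b² ≤ 2𝔔² - 8ab`, and it remains to show `∫ w a b ≥ 0`. With `H = x a² w / 2` one computes
`H' = w a b - (w - x w') a² / 2 ≤ w a b` because `w ≥ 0 ≥ w'`; moreover `H(0) = 0` (as `a` is
bounded) and `H(1) ≥ 0`, so `∫ w a b ≥ H(1) - H(0) ≥ 0`.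
-/

open MeasureTheory Set intervalIntegral Filter Topology

lemma four_sq_add_eight_mul_add_sq_mul_sq_le {a b : ℝ} (ha : |a| ≤ 1/100) (hb : |b| ≤ 1/100) :
    (4*a^2 + 8*a*b + b^2) * ((1+a)^2*(1+b))^2 ≤ 2*(1-(1+a)^2*(1+b))^2 := by
  obtain ⟨ha1, ha2⟩ := abs_le.1 ha
  obtain ⟨hb1, hb2⟩ := abs_le.1 hb
  set D := (1+a)^2*(1+b) with hD
  set M := 4*a^2 + b^2 with hM
  set L := 4*a^2 + 8*a*b + b^2 with hL
  set u := 2*a + b with hu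
  set q := a^2 + 2*a*b + a^2*b with hq
  have hLu : L = 2*u^2 - M := by rw [hL, hM, hu]; ring
  have hE : 1 - D = -(u + q) := by rw [hD, hu, hq]; ring
  have hM_le : M ≤ 5/10000 := by nlinarith
  have hua : |u| ≤ 3/100 := abs_le.2 ⟨by linarith, by linarith⟩
  have hLa : |L| ≤ 3*M :=
    abs_le.2 ⟨by nlinarith [sq_nonneg (4*a+b)], by nlinarith [sq_nonneg (2*a-b)]⟩
  have hqa : |q| ≤ M := by
    have : |a^2*b| ≤ a^2/100 := by
      rw [abs_mul, abs_of_nonneg (sq_nonneg a)]; nlinarith [sq_nonneg a]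
    have := abs_le.1 this
    exact abs_le.2 ⟨by nlinarith [sq_nonneg (a+b)], by nlinarith [sq_nonneg (a-b)]⟩
  have hEa : |1 - D| ≤ 1/20 := by
    rw [hE, abs_neg]; linarith [abs_add_le u q]
  have h1D : |1 + D| ≤ 3 := abs_le.2 ⟨by linarith [abs_le.1 hEa], by linarith [abs_le.1 hEa]⟩
  have hcross : |L * ((1 - D) * (1 + D))| ≤ 9/20 * M := by
    rw [abs_mul, abs_mul]
    calc |L| * (|1 - D| * |1 + D|) ≤ (3*M) * (1/20 * 3) := by gcongr
      _ = 9/20 * M := by ring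
  have huq : |4*(u*q)| ≤ 12/100 * M := by
    rw [abs_mul, abs_mul, abs_of_pos (by norm_num : (0:ℝ) < 4)]
    nlinarith [abs_nonneg u, abs_nonneg q]
  -- `L D² = L - L (1 - D)(1 + D)` and `2 (1 - D)² ≥ 2u² + 4uq = L + M + 4uq`, errors `≤ 0.57 M`
  have hD2 : D^2 = 1 - (1 - D)*(1 + D) := by ring
  rw [hD2, hE]
  nlinarith [abs_le.1 hcross, abs_le.1 huq, sq_nonneg q]

lemma four_mul_sq_add_sq_le {s d : ℝ} (hs : |s - 1| ≤ 1/100) (hd : |d - 1| ≤ 1/100) :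
    4 * (s - 1)^2 + (d - 1)^2 ≤ 2 * ((s^2 * d)⁻¹ - 1)^2 - 8 * ((s - 1) * (d - 1)) := by
  have key := four_sq_add_eight_mul_add_sq_mul_sq_le hs hd
  simp only [add_sub_cancel] at key
  have hpos : 0 < s^2 * d := by
    have : 0 < d := by linarith [abs_le.1 hd]
    have : 0 < s := by linarith [abs_le.1 hs]
    positivity
  have hQ : (s^2 * d)⁻¹ - 1 = (1 - s^2 * d) / (s^2 * d) := by
    rw [inv_eq_one_div, div_sub_one hpos.ne']
  rw [hQ, div_pow, ← mul_div_assoc, le_sub_iff_add_le, le_div_iff₀ (by positivity)]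
  linarith

lemma abs_inv_sq_mul_sub_one_le_one {s d : ℝ} (hs : |s - 1| ≤ 1/100) (hd : |d - 1| ≤ 1/100) :
    |(s^2 * d)⁻¹ - 1| ≤ 1 := by
  obtain ⟨hs1, hs2⟩ := abs_le.1 hs
  obtain ⟨hd1, hd2⟩ := abs_le.1 hd
  have hlo : 2⁻¹ ≤ s^2 * d := by nlinarith
  have hhi : s^2 * d ≤ 2 := by nlinarith
  have h1 : (s^2 * d)⁻¹ ≤ 2 := by simpa using inv_anti₀ (by norm_num) hlo
  have h2 : 2⁻¹ ≤ (s^2 * d)⁻¹ := inv_anti₀ (by linarith) hhi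
  rw [abs_le]; constructor <;> linarith

lemma intervalIntegrable_mul_of_continuousOn_Ioo {w g : ℝ → ℝ} {a b C : ℝ} (hab : a ≤ b)
    (hw : ContinuousOn w (Icc a b)) (hg : ContinuousOn g (Ioo a b))
    (hC : ∀ x ∈ Ioo a b, |g x| ≤ C) :
    IntervalIntegrable (fun x => w x * g x) volume a b := by
  have hg_int : IntervalIntegrable g volume a b := by
    rw [intervalIntegrable_iff_integrableOn_Ioo_of_le hab]
    refine IntegrableOn.of_bound measure_Ioo_lt_top (hg.aestronglyMeasurable measurableSet_Ioo) C ?_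
    filter_upwards [ae_restrict_mem measurableSet_Ioo] with x hx using hC x hx
  exact hg_int.continuousOn_mul (by rwa [uIcc_of_le hab])

lemma hasDerivAt_mul_div_sub_one_sq_mul {w r : ℝ → ℝ} {w' r' x : ℝ} (hx : x ≠ 0)
    (hw : HasDerivAt w w' x) (hr : HasDerivAt r r' x) :
    HasDerivAt (fun t => t * (r t / t - 1)^2 * w t / 2)
      (w x * ((r x / x - 1) * (r' - 1)) - (w x - x * w') * (r x / x - 1)^2 / 2) x := by
  have ha := (hr.fun_div (hasDerivAt_id' x) hx).sub_const 1
  refine ((((hasDerivAt_id' x).fun_mul (ha.fun_pow 2)).fun_mul hw).div_const 2).congr_deriv ?_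
  simp only [Nat.cast_ofNat, Nat.add_one_sub_one, pow_one]
  field_simp
  ring

theorem integral_mul_div_sub_one_mul_sub_one_nonneg {w w' r r' : ℝ → ℝ} {c C : ℝ} (hc : 0 ≤ c)
    (hw : ContinuousOn w (Icc 0 c)) (hw0 : ∀ x ∈ Icc 0 c, 0 ≤ w x)
    (hwd : ∀ x ∈ Ioo 0 c, HasDerivAt w (w' x) x) (hw' : ∀ x ∈ Ioo 0 c, w' x ≤ 0)
    (hr : ContinuousOn r (Icc 0 c)) (hrd : ∀ x ∈ Ioo 0 c, HasDerivAt r (r' x) x)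
    (hs : ∀ x ∈ Ioc 0 c, |r x / x - 1| ≤ C)
    (hint : IntervalIntegrable (fun x => w x * ((r x / x - 1) * (r' x - 1))) volume 0 c) :
    0 ≤ ∫ x in 0..c, w x * ((r x / x - 1) * (r' x - 1)) := by
  set H : ℝ → ℝ := fun t => t * (r t / t - 1)^2 * w t / 2
  have hH_zero : ContinuousWithinAt H (Icc 0 c) 0 := by
    rw [← Ioc_insert_left hc, continuousWithinAt_insert_self]
    have hlim : Tendsto (fun t => t * (r t / t - 1)^2) (𝓝[Ioc 0 c] 0) (𝓝 0) := by
      refine ((continuous_id.tendsto 0).mono_left nhdsWithin_le_nhds).zero_mul_isBoundedUnder_le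
        (isBoundedUnder_of_eventually_le (a := C^2)
          (eventually_nhdsWithin_of_forall fun t ht => ?_))
      simpa only [Function.comp, norm_pow, Real.norm_eq_abs, sq_abs] using
        pow_le_pow_left₀ (abs_nonneg _) (hs t ht) 2
    simpa [ContinuousWithinAt, H] using
      (hlim.mul ((hw 0 ⟨le_rfl, hc⟩).mono Ioc_subset_Icc_self)).div_const 2
  have hH_cont : ContinuousOn H (Icc 0 c) := by
    intro x hx
    rcases hx.1.eq_or_lt with rfl | hx0
    · exact hH_zero
    · exact ((continuousWithinAt_id.mul ((((hr x hx).div continuousWithinAt_id hx0.ne').sub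
        continuousWithinAt_const).pow 2)).mul (hw x hx)).div_const 2
  have hH_le := sub_le_integral_of_hasDeriv_right_of_le hc hH_cont
    (fun x hx =>
      (hasDerivAt_mul_div_sub_one_sq_mul hx.1.ne' (hwd x hx) (hrd x hx)).hasDerivWithinAt)
    ((intervalIntegrable_iff_integrableOn_Icc_of_le hc).1 hint) fun x hx => by
      have : 0 ≤ w x - x * w' x := by
        nlinarith [hw0 x (Ioo_subset_Icc_self hx), hw' x hx, hx.1]
      exact sub_le_self _ (by positivity)
  have hH_c : 0 ≤ H c := by
    have := hw0 c ⟨hc, le_rfl⟩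
    positivity
  simp only [H, zero_mul, zero_div, sub_zero] at hH_le hH_c
  linarith

lemma intervalIntegrable_mul_sub_one_mul_sub_one {w s d : ℝ → ℝ} {a b C : ℝ} (hab : a ≤ b)
    (hw : ContinuousOn w (Icc a b)) (hs : ContinuousOn s (Ioo a b)) (hd : ContinuousOn d (Ioo a b))
    (hsC : ∀ x ∈ Ioo a b, |s x - 1| ≤ C) (hdC : ∀ x ∈ Ioo a b, |d x - 1| ≤ C) :
    IntervalIntegrable (fun x => w x * ((s x - 1) * (d x - 1))) volume a b :=
  intervalIntegrable_mul_of_continuousOn_Ioo hab hw (by fun_prop) fun x hx => by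
    rw [abs_mul]
    exact mul_le_mul (hsC x hx) (hdC x hx) (abs_nonneg _) ((abs_nonneg _).trans (hsC x hx))

theorem integral_mul_four_mul_sq_add_sq_le {w s d : ℝ → ℝ} {a b : ℝ} (hab : a ≤ b)
    (hw : ContinuousOn w (Icc a b)) (hw0 : ∀ x ∈ Ioo a b, 0 ≤ w x)
    (hs : ContinuousOn s (Ioo a b)) (hd : ContinuousOn d (Ioo a b))
    (hs1 : ∀ x ∈ Ioo a b, |s x - 1| ≤ 1/100) (hd1 : ∀ x ∈ Ioo a b, |d x - 1| ≤ 1/100)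
    (hcross : 0 ≤ ∫ x in a..b, w x * ((s x - 1) * (d x - 1))) :
    ∫ x in a..b, w x * (4 * (s x - 1)^2 + (d x - 1)^2)
      ≤ 2 * ∫ x in a..b, w x * ((s x ^ 2 * d x)⁻¹ - 1)^2 := by
  have hs1' x (hx : x ∈ Ioo a b) := abs_le.1 (hs1 x hx)
  have hd1' x (hx : x ∈ Ioo a b) := abs_le.1 (hd1 x hx)
  have hpos x (hx : x ∈ Ioo a b) : 0 < s x ^ 2 * d x := by
    have : 0 < s x := by linarith [hs1' x hx]
    have : 0 < d x := by linarith [hd1' x hx]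
    positivity
  have hL_int : IntervalIntegrable (fun x => w x * (4 * (s x - 1)^2 + (d x - 1)^2)) volume a b :=
    intervalIntegrable_mul_of_continuousOn_Ioo (C := 1) hab hw (by fun_prop) fun x hx => by
      have := hs1' x hx; have := hd1' x hx
      rw [abs_le]; constructor <;> nlinarith
  have hQ_int : IntervalIntegrable (fun x => w x * ((s x ^ 2 * d x)⁻¹ - 1)^2) volume a b :=
    intervalIntegrable_mul_of_continuousOn_Ioo (C := 1) hab hw
      ((((hs.pow 2).mul hd).inv₀ fun x hx => (hpos x hx).ne').sub continuousOn_const |>.pow 2)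
      fun x hx => by
        rw [abs_pow]
        exact pow_le_one₀ (abs_nonneg _) (abs_inv_sq_mul_sub_one_le_one (hs1 x hx) (hd1 x hx))
  have hX_int := intervalIntegrable_mul_sub_one_mul_sub_one hab hw hs hd hs1 hd1
  calc ∫ x in a..b, w x * (4 * (s x - 1)^2 + (d x - 1)^2)
      ≤ ∫ x in a..b,
          (2 * (w x * ((s x ^ 2 * d x)⁻¹ - 1)^2) - 8 * (w x * ((s x - 1) * (d x - 1)))) :=
        integral_mono_on_of_le_Ioo hab hL_int ((hQ_int.const_mul 2).sub (hX_int.const_mul 8))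
          fun x hx => by
            have := mul_le_mul_of_nonneg_left
              (four_mul_sq_add_sq_le (hs1 x hx) (hd1 x hx)) (hw0 x hx)
            linarith
    _ = 2 * (∫ x in a..b, w x * ((s x ^ 2 * d x)⁻¹ - 1)^2)
          - 8 * ∫ x in a..b, w x * ((s x - 1) * (d x - 1)) := by
        rw [integral_sub (hQ_int.const_mul 2) (hX_int.const_mul 8),
          intervalIntegral.integral_const_mul, intervalIntegral.integral_const_mul]
    _ ≤ 2 * ∫ x in a..b, w x * ((s x ^ 2 * d x)⁻¹ - 1)^2 := by linarith

theorem Q_controls_rx :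
    ∃ ε₀ : ℝ, 0 < ε₀ ∧ ε₀ ≤ 1/2 ∧
      ∀ w r : ℝ → ℝ,
        ContDiffOn ℝ 1 w (Icc 0 1) →
        (∀ x ∈ Icc (0:ℝ) 1, 0 ≤ w x) →
        (∀ x ∈ Icc (0:ℝ) 1, deriv w x ≤ 0) →
        w 1 = 0 →
        ContDiffOn ℝ 1 r (Icc 0 1) →
        r 0 = 0 →
        (∀ x ∈ Ioc (0:ℝ) 1, |deriv r x - 1| ≤ ε₀) →
        (∀ x ∈ Ioc (0:ℝ) 1, |r x / x - 1| ≤ ε₀) →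
        ∫ x in (0:ℝ)..1, w x * (4 * (r x / x - 1) ^ 2 + (deriv r x - 1) ^ 2)
          ≤ 2 * ∫ x in (0:ℝ)..1, w x * (x ^ 2 / ((r x) ^ 2 * deriv r x) - 1) ^ 2 := by
  refine ⟨1/100, by norm_num, by norm_num, fun w r hw hw0 hw' _ hr _ hd hs => ?_⟩
  have hderiv {f : ℝ → ℝ} (hf : ContDiffOn ℝ 1 f (Icc 0 1)) (x : ℝ) (hx : x ∈ Ioo (0:ℝ) 1) :
      HasDerivAt f (deriv f x) x :=
    ((hf.differentiableOn one_ne_zero x (Ioo_subset_Icc_self hx)).differentiableAt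
      (Icc_mem_nhds hx.1 hx.2)).hasDerivAt
  have hs_cont : ContinuousOn (fun x => r x / x) (Ioo 0 1) :=
    (hr.continuousOn.mono Ioo_subset_Icc_self).div continuousOn_id fun x hx => hx.1.ne'
  have hd_cont : ContinuousOn (deriv r) (Ioo 0 1) :=
    (hr.mono Ioo_subset_Icc_self).continuousOn_deriv_of_isOpen isOpen_Ioo le_rfl
  have hs' x (hx : x ∈ Ioo (0:ℝ) 1) := hs x (Ioo_subset_Ioc_self hx)
  have hd' x (hx : x ∈ Ioo (0:ℝ) 1) := hd x (Ioo_subset_Ioc_self hx)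
  have hcross := integral_mul_div_sub_one_mul_sub_one_nonneg zero_le_one hw.continuousOn hw0
    (hderiv hw) (fun x hx => hw' x (Ioo_subset_Icc_self hx)) hr.continuousOn (hderiv hr) hs
    (intervalIntegrable_mul_sub_one_mul_sub_one zero_le_one hw.continuousOn hs_cont hd_cont hs' hd')
  have hQ (x : ℝ) : x ^ 2 / (r x ^ 2 * deriv r x) = ((r x / x) ^ 2 * deriv r x)⁻¹ := by
    rw [div_pow, div_mul_eq_mul_div, inv_div]
  simp_rw [hQ]
  exact integral_mul_four_mul_sq_add_sq_le zero_le_one hw.continuousOn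
    (fun x hx => hw0 x (Ioo_subset_Icc_self hx)) hs_cont hd_cont hs' hd' hcross
end

section
/- Let $w : [0,1] \to \mathbb{R}$ be continuously differentiable with $w \ge 0$, $w' \le 0$ on $[0,1]$. Let $f : [0,1] \to \mathbb{R}$ be continuously differentiable. Then $$\int_0^1 w(x) \left[ 2 f(x) + x f'(x) \right] f(x)\, dx \ge 0.$$ -/
/-!
Since $(x w f^2)' = w f^2 + x w' f^2 + 2 x w f f'$, one has
$2 w (2 f + x f') f = (x w f^2)' + (3 w - x w') f^2$. Integrating over $[0,1]$ gives
$2 \int_0^1 w (2 f + x f') f = w(1) f(1)^2 + \int_0^1 (3 w - x w') f^2$,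
and both terms on the right are nonnegative because $w \ge 0$ and $w' \le 0$.
-/

open MeasureTheory Set intervalIntegral

theorem ContDiffOn.hasDerivAt_of_mem_Ioo {g : ℝ → ℝ} {a b x : ℝ}
    (hg : ContDiffOn ℝ 1 g (Icc a b)) (hx : x ∈ Ioo a b) : HasDerivAt g (deriv g x) x :=
  ((hg.differentiableOn one_ne_zero x (Ioo_subset_Icc_self hx)).differentiableAt
    (Icc_mem_nhds hx.1 hx.2)).hasDerivAt

/-- `deriv g` may be junk at `a` and `b`, but on `Ioo a b` it agrees with the function
`derivWithin g (Icc a b)`, which is continuous on `Icc a b`. -/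
theorem ContDiffOn.intervalIntegrable_deriv {g : ℝ → ℝ} {a b : ℝ} (hab : a < b)
    (hg : ContDiffOn ℝ 1 g (Icc a b)) : IntervalIntegrable (deriv g) volume a b := by
  rw [intervalIntegrable_iff_integrableOn_Ioo_of_le hab.le]
  refine ((hg.continuousOn_derivWithin (uniqueDiffOn_Icc hab) le_rfl).integrableOn_Icc.mono_set
    Ioo_subset_Icc_self).congr_fun (fun x hx => ?_) measurableSet_Ioo
  exact derivWithin_of_mem_nhds (Icc_mem_nhds hx.1 hx.2)

theorem two_mul_integral_mul_two_mul_add_mul_deriv_mul {w f : ℝ → ℝ} {a b : ℝ} (hab : a < b)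
    (hw : ContDiffOn ℝ 1 w (Icc a b)) (hf : ContDiffOn ℝ 1 f (Icc a b)) :
    2 * ∫ x in a..b, w x * (2 * f x + x * deriv f x) * f x =
      (b * w b * f b ^ 2 - a * w a * f a ^ 2) +
        ∫ x in a..b, (3 * w x - x * deriv w x) * f x ^ 2 := by
  have hwc : ContinuousOn w (uIcc a b) := uIcc_of_le hab.le ▸ hw.continuousOn
  have hfc : ContinuousOn f (uIcc a b) := uIcc_of_le hab.le ▸ hf.continuousOn
  have hw'i := hw.intervalIntegrable_deriv hab
  have hf'i := hf.intervalIntegrable_deriv hab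
  set G' : ℝ → ℝ := fun x =>
    deriv w x * (x * f x ^ 2) + w x * f x ^ 2 + deriv f x * (2 * x * w x * f x)
  have hG'i : IntervalIntegrable G' volume a b :=
    ((hw'i.mul_continuousOn (by fun_prop)).add (hwc.mul (hfc.pow 2)).intervalIntegrable).add
      (hf'i.mul_continuousOn (by fun_prop))
  have hRi : IntervalIntegrable (fun x => (3 * w x - x * deriv w x) * f x ^ 2) volume a b :=
    ((continuousOn_const.mul hwc).intervalIntegrable.sub
      (hw'i.continuousOn_mul continuousOn_id)).mul_continuousOn (hfc.pow 2)
  have hFTC : ∫ x in a..b, G' x = b * w b * f b ^ 2 - a * w a * f a ^ 2 := by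
    refine integral_eq_sub_of_hasDerivAt_of_le hab.le
      (continuousOn_id.mul hw.continuousOn |>.mul (hf.continuousOn.pow 2)) (fun x hx => ?_) hG'i
    refine (((hasDerivAt_id x).mul (hw.hasDerivAt_of_mem_Ioo hx)).mul
      ((hf.hasDerivAt_of_mem_Ioo hx).pow 2)).congr_deriv ?_
    simp only [G', id, Pi.mul_apply, Pi.pow_apply, Nat.add_one_sub_one, pow_one]
    ring
  rw [← hFTC, ← integral_add hG'i hRi, ← intervalIntegral.integral_const_mul]
  exact integral_congr fun x _ => by simp only [G']; ring

theorem sign_observation (w f : ℝ → ℝ)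
    (hw : ContDiffOn ℝ 1 w (Icc 0 1))
    (hw0 : ∀ x ∈ Icc (0:ℝ) 1, 0 ≤ w x)
    (hw' : ∀ x ∈ Icc (0:ℝ) 1, deriv w x ≤ 0)
    (hf : ContDiffOn ℝ 1 f (Icc 0 1)) :
    0 ≤ ∫ x in (0:ℝ)..1, w x * (2 * f x + x * deriv f x) * f x := by
  have hboundary : 0 ≤ 1 * w 1 * f 1 ^ 2 - 0 * w 0 * f 0 ^ 2 := by
    have := hw0 1 (right_mem_Icc.2 zero_le_one)
    simp only [one_mul, zero_mul, sub_zero]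
    positivity
  have hbulk : 0 ≤ ∫ x in (0:ℝ)..1, (3 * w x - x * deriv w x) * f x ^ 2 :=
    integral_nonneg zero_le_one fun x hx =>
      mul_nonneg (by nlinarith [hw0 x hx, hw' x hx, hx.1]) (sq_nonneg _)
  linarith [two_mul_integral_mul_two_mul_add_mul_deriv_mul zero_lt_one hw hf]
end
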